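/- arXiv:0708.2944 — 8 statements merged into one kernel-verified Lean document; each statement's English description precedes it below -/
import Mathlib

section
/- Let Γ be a simple graph with finite vertex set S, let A be a unital C*-algebra, and let (V_s)_{s∈S} satisfy the Toeplitz–Artin relations for Γ. Then for every finite list L of elements of A, each term of which is equal to V_s or to V_s* for some s ∈ S, either the product of L (in order) equals 0, or there exist finite sequences s_1,…,s_p and t_1,…,t_q of elements of S such that the product of L equals (V_{s_1}⋯V_{s_p})·(V_{t_1}⋯V_{t_q})* (where an empty product is interpreted as 1). -/
/-!
Moving an adjoint `(V s)*` rightwards through a word `V t₁ ⋯ V t_n` either kills the product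
(at the first non-adjacent `tᵢ ≠ s`), cancels against the first `tᵢ = s`, or passes through the
whole word when every `tᵢ` is adjacent to `s`. Hence multiplying `(V s₁ ⋯ V s_p)(V t₁ ⋯ V t_q)*`
on the left by some `V s` or `(V s)*` gives `0` or another product of this shape, and induction on
the list finishes the proof.
-/

/-- A family `(V s)` of elements of a unital C*-algebra `A` satisfies the
Toeplitz–Artin relations for a simple graph `Γ` if:
(1) each `V s` is an isometry;
(2) `V s` commutes and *-commutes with `V t` whenever `s` and `t` are adjacent;
(3) `(V s)* (V t) = 0` whenever `s ≠ t` are non-adjacent. -/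
def SatisfiesToeplitzArtin {S A : Type*} [Ring A] [StarRing A]
    (Γ : SimpleGraph S) (V : S → A) : Prop :=
  (∀ s, star (V s) * V s = 1) ∧
  (∀ s t, Γ.Adj s t → V s * V t = V t * V s) ∧
  (∀ s t, Γ.Adj s t → star (V s) * V t = V t * star (V s)) ∧
  (∀ s t, s ≠ t → ¬ Γ.Adj s t → star (V s) * V t = 0)

def IsNormalForm {S A : Type*} [Ring A] [StarRing A] (V : S → A) (x : A) : Prop :=
  x = 0 ∨ ∃ w₁ w₂ : List S, x = (w₁.map V).prod * star ((w₂.map V).prod)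

section

variable {S A : Type*} [Ring A] [StarRing A] {Γ : SimpleGraph S} {V : S → A}

theorem SatisfiesToeplitzArtin.star_mul_prod_map (hTA : SatisfiesToeplitzArtin Γ V)
    (s : S) (w : List S) :
    star (V s) * (w.map V).prod = 0 ∨ ∃ w' : List S,
      star (V s) * (w.map V).prod = (w'.map V).prod ∨
        star (V s) * (w.map V).prod = (w'.map V).prod * star (V s) := by
  obtain ⟨hiso, -, hstar_comm, hzero⟩ := hTA
  induction w with
  | nil => exact Or.inr ⟨[], Or.inr (by simp)⟩
  | cons t w ih =>
    have hcons : star (V s) * ((t :: w).map V).prod = star (V s) * V t * (w.map V).prod := by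
      simp [mul_assoc]
    rw [hcons]
    by_cases hst : s = t
    · subst hst
      exact Or.inr ⟨w, Or.inl (by rw [hiso, one_mul])⟩
    by_cases hadj : Γ.Adj s t
    · rw [hstar_comm s t hadj, mul_assoc]
      rcases ih with h0 | ⟨w', hw' | hw'⟩
      · exact Or.inl (by rw [h0, mul_zero])
      · exact Or.inr ⟨t :: w', Or.inl (by simp [hw'])⟩
      · exact Or.inr ⟨t :: w', Or.inr (by simp [hw', mul_assoc])⟩
    · exact Or.inl (by rw [hzero s t hst hadj, zero_mul])

theorem isNormalForm_one : IsNormalForm V (1 : A) :=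
  Or.inr ⟨[], [], by simp⟩

theorem IsNormalForm.mul_left {x : A} (hx : IsNormalForm V x) (s : S) :
    IsNormalForm V (V s * x) := by
  rcases hx with rfl | ⟨w₁, w₂, rfl⟩
  · exact Or.inl (mul_zero _)
  · exact Or.inr ⟨s :: w₁, w₂, by simp [mul_assoc]⟩

theorem IsNormalForm.star_mul_left (hTA : SatisfiesToeplitzArtin Γ V) {x : A}
    (hx : IsNormalForm V x) (s : S) : IsNormalForm V (star (V s) * x) := by
  rcases hx with rfl | ⟨w₁, w₂, rfl⟩
  · exact Or.inl (mul_zero _)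
  rw [← mul_assoc]
  rcases hTA.star_mul_prod_map s w₁ with h0 | ⟨w', hw' | hw'⟩
  · exact Or.inl (by rw [h0, zero_mul])
  · exact Or.inr ⟨w', w₂, by rw [hw']⟩
  · refine Or.inr ⟨w', w₂ ++ [s], ?_⟩
    rw [hw', mul_assoc, List.map_append, List.prod_append, star_mul]
    simp

end

theorem words_normal_form_general {S A : Type*}
    [NormedRing A] [StarRing A]
    (Γ : SimpleGraph S) (V : S → A) (hTA : SatisfiesToeplitzArtin Γ V)
    (L : List A) (hL : ∀ a ∈ L, ∃ s : S, a = V s ∨ a = star (V s)) :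
    L.prod = 0 ∨
      ∃ w₁ w₂ : List S, L.prod = (w₁.map V).prod * star ((w₂.map V).prod) := by
  show IsNormalForm V L.prod
  induction L with
  | nil => exact isNormalForm_one
  | cons a L ih =>
    have hL' := ih fun b hb => hL b (List.mem_cons_of_mem a hb)
    obtain ⟨s, rfl | rfl⟩ := hL a List.mem_cons_self
    · exact hL'.mul_left s
    · exact hL'.star_mul_left hTA s

/-- Every product of factors each of the form `V s` or `(V s)*` either vanishes
or can be rewritten as `(V s₁ ⋯ V s_p) · (V t₁ ⋯ V t_q)*`. -/
theorem words_normal_form {S A : Type*} [Fintype S]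
    [NormedRing A] [StarRing A] [CStarRing A] [NormedAlgebra ℂ A]
    [StarModule ℂ A] [CompleteSpace A]
    (Γ : SimpleGraph S) (V : S → A) (hTA : SatisfiesToeplitzArtin Γ V)
    (L : List A) (hL : ∀ a ∈ L, ∃ s : S, a = V s ∨ a = star (V s)) :
    L.prod = 0 ∨
      ∃ w₁ w₂ : List S, L.prod = (w₁.map V).prod * star ((w₂.map V).prod) :=
  words_normal_form_general Γ V hTA L hL
end

section
/- Let Γ be a simple graph with vertex set S, let A be a unital C*-algebra, and let (V_s)_{s∈S} satisfy the Toeplitz–Artin relations for Γ. Let s_1,…,s_m be a list of elements of S and let l ∈ S with s_i ≠ l for all i. Then V_l* · (∏_{i=1}^m (1 − V_{s_i} V_{s_i}*)) · V_l = ∏_{i : s_i adjacent to l in Γ} (1 − V_{s_i} V_{s_i}*), where the product on the right is taken over those indices i (in the same order) for which s_i is adjacent to l. -/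
/-!
Conjugating by the isometry `V l` acts on the product factor by factor: `(V l)*` commutes with
the defect projection `1 - V s (V s)*` of a neighbour `s` of `l`, and is left unchanged by it
for a non-neighbour `s ≠ l`, since then `(V l)* V s = 0`. Moving `(V l)*` across the product
therefore deletes exactly the non-neighbour factors, and `(V l)* V l = 1` removes it at the end.
-/

theorem List.mul_prod_map_eq_prod_filter_map_mul {M ι : Type*} [Monoid M] (x : M) (f : ι → M)
    (p : ι → Bool) (L : List ι) (hcomm : ∀ i ∈ L, p i → Commute x (f i))
    (habsorb : ∀ i ∈ L, ¬ p i → x * f i = x) :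
    x * (L.map f).prod = ((L.filter p).map f).prod * x := by
  induction L with
  | nil => simp
  | cons i L ih =>
    have ih := ih (fun j hj => hcomm j (mem_cons_of_mem _ hj))
      (fun j hj => habsorb j (mem_cons_of_mem _ hj))
    by_cases hi : p i
    · rw [map_cons, prod_cons, filter_cons_of_pos hi, map_cons, prod_cons, ← mul_assoc,
        (hcomm i mem_cons_self hi).eq, mul_assoc, ih, mul_assoc]
    · rw [map_cons, prod_cons, filter_cons_of_neg hi, ← mul_assoc,
        habsorb i mem_cons_self hi, ih]

namespace SatisfiesToeplitzArtin

variable {S A : Type*} [Ring A] [StarRing A] {Γ : SimpleGraph S} {V : S → A}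

theorem commute_star_defect (hTA : SatisfiesToeplitzArtin Γ V) {s l : S} (hadj : Γ.Adj s l) :
    Commute (star (V l)) (1 - V s * star (V s)) := by
  have hV : Commute (star (V l)) (V s) := hTA.2.2.1 l s hadj.symm
  have hVstar : Commute (star (V l)) (star (V s)) := Commute.star_star (hTA.2.1 l s hadj.symm)
  exact (Commute.one_right _).sub_right (hV.mul_right hVstar)

theorem star_mul_defect_of_not_adj (hTA : SatisfiesToeplitzArtin Γ V) {s l : S} (hsl : s ≠ l)
    (hadj : ¬ Γ.Adj s l) : star (V l) * (1 - V s * star (V s)) = star (V l) := by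
  have horth : star (V l) * V s = 0 := hTA.2.2.2 l s hsl.symm (fun h => hadj h.symm)
  rw [mul_sub, mul_one, ← mul_assoc, horth, zero_mul, sub_zero]

end SatisfiesToeplitzArtin

theorem compress_defect_projection_general {S A : Type*}
    [NormedRing A] [StarRing A]
    (Γ : SimpleGraph S) [DecidableRel Γ.Adj]
    (V : S → A) (hTA : SatisfiesToeplitzArtin Γ V)
    (L : List S) (l : S) (hl : ∀ s ∈ L, s ≠ l) :
    star (V l) * (L.map fun s => (1 : A) - V s * star (V s)).prod * V l
      = ((L.filter fun s => Γ.Adj s l).map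
          fun s => (1 : A) - V s * star (V s)).prod := by
  rw [List.mul_prod_map_eq_prod_filter_map_mul _ _ (fun s => Γ.Adj s l) L
      (fun s _ hadj => hTA.commute_star_defect (by simpa using hadj))
      (fun s hs hadj => hTA.star_mul_defect_of_not_adj (hl s hs) (by simpa using hadj)),
    mul_assoc, hTA.1 l, mul_one]

/-- Compressing a product of complementary range projections by an isometry
`V l` (with `l` different from all the listed vertices) keeps exactly the
factors indexed by neighbours of `l`, in the same order. -/
theorem compress_defect_projection {S A : Type*}
    [NormedRing A] [StarRing A] [CStarRing A] [NormedAlgebra ℂ A]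
    [StarModule ℂ A] [CompleteSpace A]
    (Γ : SimpleGraph S) [DecidableRel Γ.Adj]
    (V : S → A) (hTA : SatisfiesToeplitzArtin Γ V)
    (L : List S) (l : S) (hl : ∀ s ∈ L, s ≠ l) :
    star (V l) * (L.map fun s => (1 : A) - V s * star (V s)).prod * V l
      = ((L.filter fun s => Γ.Adj s l).map
          fun s => (1 : A) - V s * star (V s)).prod :=
  compress_defect_projection_general Γ V hTA L l hl
end

section
/- Let Γ be a simple graph with finite vertex set S whose complement Γ^opp is connected, let A be a unital C*-algebra with 1 ≠ 0, and let (V_s)_{s∈S} satisfy the Toeplitz–Artin relations for Γ. Then for every proper subset T ⊊ S, the product ∏_{s∈T} (1 − V_s V_s*) (taken in any fixed order of T) is nonzero. -/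
namespace SimpleGraph.Connected

variable {V : Type*} {G : SimpleGraph V}

theorem exists_walk_support_superset (hG : G.Connected) (u : V) (l : List V) :
    ∃ p : G.Walk u u, ∀ v ∈ l, v ∈ p.support := by
  induction l with
  | nil => exact ⟨.nil, by simp⟩
  | cons v l ih =>
    obtain ⟨p, hp⟩ := ih
    obtain ⟨q⟩ := hG.preconnected u v
    refine ⟨(q.append q.reverse).append p, fun w hw => ?_⟩
    rcases List.mem_cons.1 hw with rfl | hw
    · simp [Walk.mem_support_append_iff]
    · simp [Walk.mem_support_append_iff, hp w hw]

end SimpleGraph.Connected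

theorem star_mul_self_list_prod_eq_one {A : Type*} [Monoid A] [StarMul A] (l : List A)
    (hl : ∀ x ∈ l, star x * x = 1) : star l.prod * l.prod = 1 :=
  List.prod_induction (fun x => star x * x = 1)
    (fun a b ha hb => by rw [star_mul, mul_assoc, ← mul_assoc (star a), ha, one_mul, hb])
    (by simp) hl

theorem list_prod_map_one_sub_mul_star_mul_of_star_mul_eq_zero {ι A : Type*} [Ring A]
    [StarRing A] (f : ι → A) (w : A) (l : List ι) (hl : ∀ i ∈ l, star (f i) * w = 0) :
    (l.map fun i => 1 - f i * star (f i)).prod * w = w :=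
  List.prod_induction (fun x => x * w = w)
    (fun a b ha hb => by rw [mul_assoc, hb, ha]) (one_mul w)
    (by
      simp only [List.mem_map]
      rintro _ ⟨i, hi, rfl⟩
      rw [sub_mul, one_mul, mul_assoc, hl i hi, mul_zero, sub_zero])

namespace SatisfiesToeplitzArtin

variable {S A : Type*} [Ring A] [StarRing A] {Γ : SimpleGraph S} {V : S → A}

theorem star_mul_list_prod_support_eq_zero (hTA : SatisfiesToeplitzArtin Γ V) {t u : S}
    (p : Γᶜ.Walk t u) {s : S} (hs : s ∈ p.support) (hst : s ≠ t) :
    star (V s) * (p.support.map V).prod = 0 := by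
  induction p with
  | nil => exact absurd (by simpa using hs) hst
  | @cons a b c hab q ih =>
    rw [SimpleGraph.Walk.support_cons, List.map_cons, List.prod_cons, ← mul_assoc]
    by_cases hsa : Γ.Adj s a
    · have hsb : s ≠ b := by
        rintro rfl
        exact ((SimpleGraph.compl_adj _ _ _).1 hab).2 hsa.symm
      have hsq : s ∈ q.support := (List.mem_cons.1 hs).resolve_left hst
      rw [hTA.2.2.1 s a hsa, mul_assoc, ih hsq hsb, mul_zero]
    · rw [hTA.2.2.2 s a hst hsa, zero_mul]

end SatisfiesToeplitzArtin

theorem proper_defect_product_ne_zero_general {S A : Type*} [Fintype S] [DecidableEq S]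
    [NormedRing A] [StarRing A]
    (hA : (1 : A) ≠ 0)
    (Γ : SimpleGraph S) (V : S → A) (hTA : SatisfiesToeplitzArtin Γ V)
    (hconn : (Γᶜ).Connected)
    (T : Finset S) (hT : T ≠ Finset.univ)
    (L : List S) (hLT : L.toFinset = T) :
    (L.map fun s => (1 : A) - V s * star (V s)).prod ≠ 0 := by
  obtain ⟨t, ht⟩ : ∃ t, t ∉ T := by simpa [Finset.eq_univ_iff_forall] using hT
  obtain ⟨p, hp⟩ := hconn.exists_walk_support_superset t L
  set W := (p.support.map V).prod
  have hW : star W * W = 1 :=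
    star_mul_self_list_prod_eq_one _ (by simpa using fun s _ => hTA.1 s)
  have hfix := list_prod_map_one_sub_mul_star_mul_of_star_mul_eq_zero V W L fun s hs =>
    hTA.star_mul_list_prod_support_eq_zero p (hp s hs) fun h => ht (h ▸ hLT ▸ by simpa)
  intro hP
  rw [hP, zero_mul] at hfix
  exact hA (by rw [← hW, ← hfix, mul_zero])

/-- If the complement of `Γ` is connected and `1 ≠ 0` in `A`, then for every
proper subset `T ⊊ S` of the (finite) vertex set, the product
`∏_{s ∈ T} (1 - V s (V s)*)` (taken in any fixed order of `T`) is nonzero. -/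
theorem proper_defect_product_ne_zero {S A : Type*} [Fintype S] [DecidableEq S]
    [NormedRing A] [StarRing A] [CStarRing A] [NormedAlgebra ℂ A]
    [StarModule ℂ A] [CompleteSpace A]
    (hA : (1 : A) ≠ 0)
    (Γ : SimpleGraph S) (V : S → A) (hTA : SatisfiesToeplitzArtin Γ V)
    (hconn : (Γᶜ).Connected)
    (T : Finset S) (hT : T ≠ Finset.univ)
    (L : List S) (hnd : L.Nodup) (hLT : L.toFinset = T) :
    (L.map fun s => (1 : A) - V s * star (V s)).prod ≠ 0 :=
  proper_defect_product_ne_zero_general hA Γ V hTA hconn T hT L hLT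
end

section
/- Let Γ' be a simple graph with vertex set {1,…,n}, let A be a unital C*-algebra, and let V_1,…,V_n ∈ A satisfy the Toeplitz–Artin relations for Γ'. Let W ∈ A be an isometry (W*W = 1), let K ⊆ {1,…,n}, and suppose: W V_i = V_i W and W* V_i = V_i W* for every i ∈ K; W* V_i = 0 for every i ∈ {1,…,n} \ K; and (1 − W W*) · ∏_{i=1}^n (1 − V_i V_i*) = 0. Then ∏_{i=1}^n (1 − V_i V_i*) = W · (∏_{i∈K} (1 − V_i V_i*)) · W*. -/
private lemma pull_through {A : Type*} [Ring A] {n : ℕ}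
    (w : A) (f : Fin n → A) (K : Finset (Fin n))
    (h1 : ∀ i ∈ K, w * f i = f i * w)
    (h2 : ∀ i ∉ K, w * f i = w) :
    ∀ l : List (Fin n),
      w * (l.map f).prod = ((l.filter fun i => i ∈ K).map f).prod * w := by
  intro l
  induction l with
  | nil => simp
  | cons a l ih =>
    by_cases ha : a ∈ K
    · rw [List.filter_cons_of_pos (by simpa using ha)]
      simp only [List.map_cons, List.prod_cons]
      rw [← mul_assoc, h1 a ha, mul_assoc, ih, ← mul_assoc]
    · rw [List.filter_cons_of_neg (by simpa using ha)]
      simp only [List.map_cons, List.prod_cons]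
      rw [← mul_assoc, h2 a ha, ih]

/-- If `W` is an isometry commuting and *-commuting with the `V i` for `i ∈ K`,
with `W* V i = 0` for `i ∉ K`, and `(1 - W W*) ∏ᵢ (1 - V i (V i)*) = 0`, then
`∏ᵢ₌₁ⁿ (1 - V i (V i)*) = W (∏_{i ∈ K} (1 - V i (V i)*)) W*`. -/
theorem defect_product_eq_compressed {A : Type*} {n : ℕ}
    [NormedRing A] [StarRing A] [CStarRing A] [NormedAlgebra ℂ A]
    [StarModule ℂ A] [CompleteSpace A]
    (Γ' : SimpleGraph (Fin n)) (V : Fin n → A)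
    (hTA : SatisfiesToeplitzArtin Γ' V)
    (W : A) (hW : star W * W = 1) (K : Finset (Fin n))
    (hcomm : ∀ i ∈ K, W * V i = V i * W ∧ star W * V i = V i * star W)
    (horth : ∀ i ∉ K, star W * V i = 0)
    (hvanish : (1 - W * star W) *
      ((List.finRange n).map fun i => (1 : A) - V i * star (V i)).prod = 0) :
    ((List.finRange n).map fun i => (1 : A) - V i * star (V i)).prod
      = W * (((List.finRange n).filter fun i => i ∈ K).map
              fun i => (1 : A) - V i * star (V i)).prod * star W := by
  set f : Fin n → A := fun i => (1 : A) - V i * star (V i) with hf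
  have h1 : ∀ i ∈ K, star W * f i = f i * star W := by
    intro i hi
    have hc := (hcomm i hi).1
    have hc' := (hcomm i hi).2
    have hstar : star W * star (V i) = star (V i) * star W := by
      have := congrArg star hc
      simpa [star_mul, mul_assoc] using this.symm
    simp only [hf, mul_sub, sub_mul, mul_one, one_mul]
    rw [← mul_assoc, hc', mul_assoc, hstar, ← mul_assoc]
  have h2 : ∀ i ∉ K, star W * f i = star W := by
    intro i hi
    simp only [hf, mul_sub, mul_one, ← mul_assoc, horth i hi, zero_mul, sub_zero]
  have key := pull_through (star W) f K h1 h2 (List.finRange n)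
  have hP : ((List.finRange n).map f).prod
      = W * star W * ((List.finRange n).map f).prod := by
    have h := hvanish
    rw [sub_mul, one_mul, sub_eq_zero] at h
    exact h
  rw [hP, mul_assoc, key, ← mul_assoc]
end

section
/- Let Γ' be a simple graph with vertex set {1,…,n}, let A be a unital C*-algebra, and let V_1,…,V_n ∈ A satisfy the Toeplitz–Artin relations for Γ'. Let W ∈ A be an isometry, K ⊆ {1,…,n}, and suppose W V_i = V_i W and W* V_i = V_i W* for i ∈ K, while W* V_i = 0 for i ∉ K. Call an element w ∈ A that is a finite product w = V_{s_1}⋯V_{s_m} (with s_1,…,s_m ∈ {1,…,n}, possibly the empty product 1) reduced relative to W if there are no finite products u and u' of elements of {V_1,…,V_n}, with u' a nonempty product, such that w·W = u·W·u' in A. Then for any two elements w, w' of A that are reduced relative to W: if w ≠ w' then W* · w'* · w · W = 0, and if w = w' then W* · w'* · w · W = 1. -/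
/-- `w` is a finite product of the generators `V i` (possibly the empty
product `1`). -/
def IsWord {A : Type*} [Monoid A] {n : ℕ} (V : Fin n → A) (w : A) : Prop :=
  ∃ L : List (Fin n), w = (L.map V).prod

/-- `w` is a word in the generators `V i` which is reduced relative to the
isometry `W`: no nonempty word in the `V i` can be commuted past `W`, i.e.
there are no words `u`, `u'` with `u'` a nonempty product such that
`w W = u W u'`. -/
def ReducedRelTo {A : Type*} [Monoid A] {n : ℕ} (V : Fin n → A) (W : A)
    (w : A) : Prop :=
  IsWord V w ∧
    ∀ (u u' : List (Fin n)), u' ≠ [] →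
      w * W ≠ (u.map V).prod * W * (u'.map V).prod

set_option linter.unusedSectionVars false
section Aux
variable {A : Type*} [Ring A] [StarRing A] {n : ℕ}

lemma word_star_mul_self {Γ' : SimpleGraph (Fin n)} {V : Fin n → A}
    (hTA : SatisfiesToeplitzArtin Γ' V) (L : List (Fin n)) :
    star ((L.map V).prod) * (L.map V).prod = 1 := by
  induction L with
  | nil => simp
  | cons s L ih =>
    simp only [List.map_cons, List.prod_cons, star_mul, mul_assoc]
    rw [← mul_assoc (star (V s)), hTA.1 s, one_mul, ih]

lemma comm_list {V : Fin n → A} (a : A) :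
    ∀ (P : List (Fin n)), (∀ s ∈ P, a * V s = V s * a) →
      a * (P.map V).prod = (P.map V).prod * a := by
  intro P
  induction P with
  | nil => simp
  | cons s P ih =>
    intro h
    simp only [List.map_cons, List.prod_cons]
    rw [← mul_assoc, h s (by simp), mul_assoc, ih (fun t ht => h t (by simp [ht])),
      mul_assoc]

lemma star_push {Γ' : SimpleGraph (Fin n)} {V : Fin n → A}
    (hTA : SatisfiesToeplitzArtin Γ' V) (t : Fin n) :
    ∀ L : List (Fin n),
      star (V t) * (L.map V).prod = 0 ∨
      (∃ P Q, L = P ++ t :: Q ∧ (∀ s ∈ P, Γ'.Adj t s) ∧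
        star (V t) * (L.map V).prod = (((P ++ Q)).map V).prod) ∨
      ((∀ s ∈ L, Γ'.Adj t s) ∧
        star (V t) * (L.map V).prod = (L.map V).prod * star (V t)) := by
  intro L
  induction L with
  | nil => right; right; simp
  | cons s L ih =>
    by_cases hst : s = t
    · subst hst
      right; left
      refine ⟨[], L, rfl, by simp, ?_⟩
      simp only [List.map_cons, List.prod_cons, ← mul_assoc, hTA.1 s, one_mul,
        List.nil_append]
      
    by_cases hadj : Γ'.Adj t s
    · have hswap : star (V t) * V s = V s * star (V t) := hTA.2.2.1 t s hadj
      have key : star (V t) * (((s :: L)).map V).prod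
          = V s * (star (V t) * (L.map V).prod) := by
        simp only [List.map_cons, List.prod_cons, ← mul_assoc, hswap]
      rcases ih with h0 | ⟨P, Q, hL, hP, heq⟩ | ⟨hall, heq⟩
      · left; rw [key, h0, mul_zero]
      · right; left
        refine ⟨s :: P, Q, by simp [hL], ?_, ?_⟩
        · intro x hx
          rcases List.mem_cons.mp hx with rfl | hx
          · exact hadj
          · exact hP x hx
        · rw [key, heq]; simp [mul_assoc]
      · right; right
        constructor
        · intro x hx
          rcases List.mem_cons.mp hx with rfl | hx
          · exact hadj
          · exact hall x hx
        · rw [key, heq]; simp [mul_assoc]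
    · left
      have h0 : star (V t) * V s = 0 := hTA.2.2.2 t s (fun h => hst h.symm) hadj
      simp only [List.map_cons, List.prod_cons, ← mul_assoc, h0, zero_mul]

lemma starW_push {V : Fin n → A} (W : A) (K : Finset (Fin n))
    (h1 : ∀ i ∈ K, star W * V i = V i * star W)
    (h2 : ∀ i ∉ K, star W * V i = 0) :
    ∀ L : List (Fin n),
      ((∀ s ∈ L, s ∈ K) ∧ star W * (L.map V).prod = (L.map V).prod * star W) ∨
      star W * (L.map V).prod = 0 := by
  intro L
  induction L with
  | nil => left; simp
  | cons s L ih =>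
    by_cases hs : s ∈ K
    · rcases ih with ⟨hall, heq⟩ | h0
      · left
        refine ⟨fun x hx => ?_, ?_⟩
        · rcases List.mem_cons.mp hx with rfl | hx
          · exact hs
          · exact hall x hx
        · simp only [List.map_cons, List.prod_cons, ← mul_assoc, h1 s hs]
          rw [mul_assoc, heq, mul_assoc]
      · right
        simp only [List.map_cons, List.prod_cons, ← mul_assoc, h1 s hs]
        rw [mul_assoc, h0, mul_zero]
    · right
      simp only [List.map_cons, List.prod_cons, ← mul_assoc, h2 s hs, zero_mul]

lemma reduced_tail {V : Fin n → A} {W : A} (t : Fin n) (L : List (Fin n))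
    (h : ReducedRelTo V W (((t :: L)).map V).prod) :
    ReducedRelTo V W ((L.map V).prod) := by
  refine ⟨⟨L, rfl⟩, fun u u' hne hEq => ?_⟩
  apply h.2 (t :: u) u' hne
  simp only [List.map_cons, List.prod_cons, mul_assoc] at *
  rw [hEq]


lemma main_lemma {Γ' : SimpleGraph (Fin n)} {V : Fin n → A}
    (hTA : SatisfiesToeplitzArtin Γ' V)
    (W : A) (hW : star W * W = 1) (K : Finset (Fin n))
    (hcomm : ∀ i ∈ K, W * V i = V i * W ∧ star W * V i = V i * star W)
    (horth : ∀ i ∉ K, star W * V i = 0) :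
    ∀ L' L : List (Fin n),
      ReducedRelTo V W ((L.map V).prod) → ReducedRelTo V W ((L'.map V).prod) →
      (L.map V).prod ≠ (L'.map V).prod →
      star W * star ((L'.map V).prod) * (L.map V).prod * W = 0 := by
  intro L'
  induction L' with
  | nil =>
    intro L hL _ hne
    rcases starW_push W K (fun i hi => (hcomm i hi).2) horth L with ⟨hall, heq⟩ | h0
    · exfalso
      match L, hL, hne, hall with
      | [], _, hne, _ => exact hne rfl
      | s :: L₂, hL, _, hall =>
        apply hL.2 [] (s :: L₂) (by simp)
        have hc : W * (((s :: L₂)).map V).prod = (((s :: L₂)).map V).prod * W :=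
          comm_list W _ (fun x hx => (hcomm x (hall x hx)).1)
        simp only [List.map_nil, List.prod_nil, one_mul]
        exact hc.symm
    · simp only [List.map_nil, List.prod_nil, star_one, mul_one]
      rw [h0, zero_mul]
  | cons t L'₂ ih =>
    intro L hL hL' hne
    have hred₂ : ReducedRelTo V W ((L'₂.map V).prod) := reduced_tail t L'₂ hL'
    have key : star W * star (((t :: L'₂).map V).prod) * (L.map V).prod * W
        = star W * star ((L'₂.map V).prod) * (star (V t) * (L.map V).prod) * W := by
      simp only [List.map_cons, List.prod_cons, star_mul, mul_assoc]
    rw [key]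
    rcases star_push hTA t L with h0 | ⟨P, Q, hLPQ, hP, heq⟩ | ⟨hall, heq⟩
    · rw [h0, mul_zero, zero_mul]
    · rw [heq]
      have hcP : V t * (P.map V).prod = (P.map V).prod * V t :=
        comm_list (V t) P (fun s hs => hTA.2.1 t s (hP s hs))
      have hLdecomp : (L.map V).prod = V t * (((P ++ Q)).map V).prod := by
        subst hLPQ
        simp only [List.map_append, List.prod_append, List.map_cons, List.prod_cons]
        rw [← mul_assoc, ← hcP, mul_assoc]
      have hredM : ReducedRelTo V W ((((P ++ Q)).map V).prod) := by
        refine ⟨⟨_, rfl⟩, fun u u' hne' hEq => ?_⟩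
        apply hL.2 (t :: u) u' hne'
        rw [hLdecomp]
        simp only [List.map_cons, List.prod_cons, mul_assoc] at *
        rw [hEq]
      have hneM : (((P ++ Q)).map V).prod ≠ (L'₂.map V).prod := by
        intro hEq
        apply hne
        rw [hLdecomp, hEq]
        simp [List.map_cons, List.prod_cons]
      exact ih (P ++ Q) hredM hred₂ hneM
    · by_cases htK : t ∈ K
      · by_cases heqw : (L.map V).prod = (L'₂.map V).prod
        · exfalso
          apply hL'.2 L [t] (by simp)
          have hc : V t * (L.map V).prod = (L.map V).prod * V t :=
            comm_list (V t) L (fun s hs => hTA.2.1 t s (hall s hs))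
          have hWt : V t * W = W * V t := ((hcomm t htK).1).symm
          simp only [List.map_cons, List.prod_cons, ← heqw]
          rw [hc, mul_assoc, hWt, ← mul_assoc]
          simp
        · have hstW : star (V t) * W = W * star (V t) := by
            have h := (hcomm t htK).2
            calc star (V t) * W = star (star W * V t) := by rw [star_mul, star_star]
              _ = star (V t * star W) := by rw [h]
              _ = W * star (V t) := by rw [star_mul, star_star]
          rw [heq]
          have hre : star W * star ((L'₂.map V).prod) * ((L.map V).prod * star (V t)) * W
              = (star W * star ((L'₂.map V).prod) * (L.map V).prod * W) * star (V t) := by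
            simp only [mul_assoc, hstW]
          rw [hre, ih L hL hred₂ heqw, zero_mul]
      · have hstW : star (V t) * W = 0 := by
          have h := horth t htK
          calc star (V t) * W = star (star W * V t) := by rw [star_mul, star_star]
            _ = 0 := by rw [h, star_zero]
        rw [heq]
        have hre : star W * star ((L'₂.map V).prod) * ((L.map V).prod * star (V t)) * W
            = star W * (star ((L'₂.map V).prod) * ((L.map V).prod * (star (V t) * W))) := by
          simp only [mul_assoc]
        rw [hre, hstW, mul_zero, mul_zero, mul_zero]

end Aux

/-- For words `w`, `w'` reduced relative to `W` one has
`W* w'* w W = 0` if `w ≠ w'` and `W* w'* w W = 1` if `w = w'`. -/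
theorem reduced_words_orthogonality {A : Type*} {n : ℕ}
    [NormedRing A] [StarRing A] [CStarRing A] [NormedAlgebra ℂ A]
    [StarModule ℂ A] [CompleteSpace A]
    (Γ' : SimpleGraph (Fin n)) (V : Fin n → A)
    (hTA : SatisfiesToeplitzArtin Γ' V)
    (W : A) (hW : star W * W = 1) (K : Finset (Fin n))
    (hcomm : ∀ i ∈ K, W * V i = V i * W ∧ star W * V i = V i * star W)
    (horth : ∀ i ∉ K, star W * V i = 0)
    (w w' : A) (hw : ReducedRelTo V W w) (hw' : ReducedRelTo V W w') :
    (w ≠ w' → star W * star w' * w * W = 0) ∧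
    (w = w' → star W * star w' * w * W = 1) := by
  constructor
  · intro hne
    obtain ⟨L, hLw⟩ := hw.1
    obtain ⟨L', hLw'⟩ := hw'.1
    subst hLw hLw'
    exact main_lemma hTA W hW K hcomm horth L' L hw hw' hne
  · intro heq
    subst heq
    obtain ⟨L, hLw⟩ := hw.1
    subst hLw
    rw [mul_assoc (star W), word_star_mul_self hTA L, mul_one, hW]
end

section
/- Let G be a simple graph on a countably infinite vertex set V such that the complement graph G^opp is connected. Then there exists a sequence (S_n)_{n∈ℕ} of finite subsets of V such that: S_n has exactly n + 2 elements for every n; S_n ⊆ S_{n+1} for every n; ⋃_n S_n = V; and for every n the induced subgraph of G^opp on S_n is connected. -/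
/-!
Enumerate `V` as `e 0, e 1, …` and grow a finite vertex set that is connected in `Gᶜ` one vertex
at a time, starting from an edge of `Gᶜ`. At each step the target is the first vertex `e j` not yet
in the set; take a vertex `x` of the set closest to `e j` and add the next vertex of a geodesic
from `x` to `e j`. It is strictly closer to `e j` than every vertex of the set, so while `e j`
remains the target the distance from the set to `e j` strictly decreases, and `e j` is eventually
added. Hence every vertex is eventually added.
-/

namespace SimpleGraph

variable {V : Type*} {H : SimpleGraph V}

lemma Reachable.exists_adj_dist_lt {u v : V} (hr : H.Reachable u v) (hne : u ≠ v) :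
    ∃ w, H.Adj u w ∧ H.dist w v < H.dist u v := by
  obtain ⟨p, hp⟩ := hr.exists_walk_length_eq_dist
  cases p with
  | nil => exact absurd rfl hne
  | cons h q => exact ⟨_, h, (dist_le q).trans_lt (by simp [← hp])⟩

variable (H) in
def IsStepToward (S : Finset V) (v w : V) : Prop :=
  (∃ x ∈ S, H.Adj x w) ∧ ∀ u ∈ S, H.dist w v < H.dist u v

lemma Connected.exists_isStepToward (hH : H.Connected) {S : Finset V} (hS : S.Nonempty)
    {v : V} (hv : v ∉ S) : ∃ w, H.IsStepToward S v w := by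
  obtain ⟨x, hx, hmin⟩ := S.exists_min_image (H.dist · v) hS
  obtain ⟨w, hxw, hw⟩ := (hH x v).exists_adj_dist_lt (ne_of_mem_of_not_mem hx hv)
  exact ⟨w, ⟨x, hx, hxw⟩, fun u hu => hw.trans_le (hmin u hu)⟩

lemma connected_induce_insert_of_adj {s : Set V} {u w : V} (hs : (H.induce s).Connected)
    (hu : u ∈ s) (huw : H.Adj u w) : (H.induce (insert w s)).Connected := by
  have hunion : s ∪ {u, w} = insert w s := by
    ext x
    simp only [Set.mem_union, Set.mem_insert_iff, Set.mem_singleton_iff]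
    grind
  rw [← hunion]
  exact induce_union_connected hs.preconnected (induce_pair_connected_of_adj huw).preconnected
    ⟨u, hu, Set.mem_insert u _⟩

end SimpleGraph

section Exhaustion

variable {V : Type*} (d : V → V → ℕ) {e : ℕ → V} {S : ℕ → Finset V}

lemma exists_mem_of_forall_lt_mem (hS : Monotone S)
    (hstep : ∀ n j, (∀ i < j, e i ∈ S n) → e j ∉ S n →
      ∃ w ∈ S (n + 1), ∀ u ∈ S n, d w (e j) < d u (e j))
    {n j : ℕ} (hpre : ∀ i < j, e i ∈ S n) {x : V} (hx : x ∈ S n) : ∃ m, e j ∈ S m := by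
  induction hk : d x (e j) using Nat.strong_induction_on generalizing n x with
  | _ k ih =>
  by_cases hj : e j ∈ S n
  · exact ⟨n, hj⟩
  obtain ⟨w, hw, hlt⟩ := hstep n j hpre hj
  exact ih _ (hk ▸ hlt x hx) (fun i hi => hS n.le_succ (hpre i hi)) hw rfl

lemma exists_forall_lt_mem (hS : Monotone S)
    (hstep : ∀ n j, (∀ i < j, e i ∈ S n) → e j ∉ S n →
      ∃ w ∈ S (n + 1), ∀ u ∈ S n, d w (e j) < d u (e j))
    (h₀ : (S 0).Nonempty) (j : ℕ) : ∃ n, ∀ i < j, e i ∈ S n := by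
  induction j with
  | zero => exact ⟨0, by simp⟩
  | succ j ih =>
    obtain ⟨n, hn⟩ := ih
    obtain ⟨x, hx⟩ := h₀.mono (hS n.zero_le)
    obtain ⟨m, hm⟩ := exists_mem_of_forall_lt_mem d hS hstep hn hx
    refine ⟨max n m, fun i hi => ?_⟩
    rcases Nat.lt_succ_iff_lt_or_eq.1 hi with hi | rfl
    · exact hS (le_max_left n m) (hn i hi)
    · exact hS (le_max_right n m) hm

end Exhaustion

namespace SimpleGraph

variable {V : Type*} (H : SimpleGraph V) (e : ℕ → V)

/-- Since `sInf ∅ = 0`, this is meaningful only when some `e j` lies outside `S`. -/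
noncomputable def firstMissing (S : Finset V) : ℕ := sInf {j | e j ∉ S}

variable {H e}

lemma firstMissing_eq {S : Finset V} {j : ℕ} (hlt : ∀ i < j, e i ∈ S) (hj : e j ∉ S) :
    firstMissing e S = j :=
  le_antisymm (Nat.sInf_le hj) (le_csInf ⟨j, hj⟩ fun _ hi => not_lt.1 fun hij => hi (hlt _ hij))

variable (H e) in
noncomputable def greedyStep [DecidableEq V] [Nonempty V] (S : Finset V) : Finset V :=
  insert (Classical.epsilon (H.IsStepToward S (e (firstMissing e S)))) S

lemma exists_greedyStep_eq_insert [DecidableEq V] [Nonempty V] (hH : H.Connected) {S : Finset V}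
    (hS : (H.induce (S : Set V)).Connected) (he : ∃ j, e j ∉ S) :
    ∃ w ∉ S, greedyStep H e S = insert w S ∧ (H.induce (insert w S : Finset V)).Connected ∧
      ∀ u ∈ S, H.dist w (e (firstMissing e S)) < H.dist u (e (firstMissing e S)) := by
  obtain ⟨⟨x, hx, hxw⟩, hw⟩ := Classical.epsilon_spec
    (hH.exists_isStepToward (Finset.coe_nonempty.1 (Set.nonempty_coe_sort.1 hS.nonempty))
      (Nat.sInf_mem he))
  refine ⟨_, fun hS => (hw _ hS).false, rfl, ?_, hw⟩
  rw [Finset.coe_insert]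
  exact connected_induce_insert_of_adj hS hx hxw

lemma subset_greedyStep [DecidableEq V] [Nonempty V] (S : Finset V) : S ⊆ greedyStep H e S :=
  Finset.subset_insert _ _

theorem Connected.exists_exhaustion [Countable V] [Infinite V] (hH : H.Connected) {S₀ : Finset V}
    (h₀ : (H.induce (S₀ : Set V)).Connected) :
    ∃ S : ℕ → Finset V, (∀ n, (S n).card = S₀.card + n) ∧ Monotone S ∧ (∀ v, ∃ n, v ∈ S n) ∧
      ∀ n, (H.induce (S n : Set V)).Connected := by
  classical
  obtain ⟨e, he⟩ := exists_surjective_nat V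
  have hmissing (S : Finset V) : ∃ j, e j ∉ S := by
    obtain ⟨v, hv⟩ := Infinite.exists_notMem_finset S
    obtain ⟨j, rfl⟩ := he v
    exact ⟨j, hv⟩
  set S : ℕ → Finset V := fun n => (greedyStep H e)^[n] S₀
  have hsucc (n : ℕ) : S (n + 1) = greedyStep H e (S n) := Function.iterate_succ_apply' _ _ _
  have hinv (n : ℕ) : (S n).card = S₀.card + n ∧ (H.induce (S n : Set V)).Connected := by
    induction n with
    | zero => exact ⟨rfl, h₀⟩
    | succ n ih =>
      obtain ⟨w, hw, heq, hconn, -⟩ := exists_greedyStep_eq_insert hH ih.2 (hmissing _)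
      rw [hsucc, heq, Finset.card_insert_of_notMem hw, ih.1]
      exact ⟨rfl, hconn⟩
  have hmono : Monotone S := monotone_nat_of_le_succ fun n => hsucc n ▸ subset_greedyStep _
  have hstep (n j : ℕ) (hlt : ∀ i < j, e i ∈ S n) (hj : e j ∉ S n) :
      ∃ w ∈ S (n + 1), ∀ u ∈ S n, H.dist w (e j) < H.dist u (e j) := by
    obtain ⟨w, -, heq, -, hw⟩ := exists_greedyStep_eq_insert hH (hinv n).2 ⟨j, hj⟩
    rw [firstMissing_eq hlt hj] at hw
    exact ⟨w, hsucc n ▸ heq ▸ Finset.mem_insert_self w _, hw⟩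
  refine ⟨S, fun n => (hinv n).1, hmono, fun v => ?_, fun n => (hinv n).2⟩
  obtain ⟨j, rfl⟩ := he v
  obtain ⟨n, hn⟩ := exists_forall_lt_mem H.dist hmono hstep
    (Finset.coe_nonempty.1 (Set.nonempty_coe_sort.1 h₀.nonempty)) (j + 1)
  exact ⟨n, hn j j.lt_succ_self⟩

end SimpleGraph

/-- If `G` is a simple graph on a countably infinite vertex set whose
complement `Gᶜ` is connected, then there is an increasing exhaustion of the
vertex set by finite subsets `S n` of cardinality `n + 2` on each of which the
induced subgraph of `Gᶜ` is connected. -/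
theorem exists_exhaustion_by_connected_complement_subgraphs
    {V : Type*} [Countable V] [Infinite V]
    (G : SimpleGraph V) (hconn : (Gᶜ).Connected) :
    ∃ S : ℕ → Finset V,
      (∀ n, (S n).card = n + 2) ∧
      (∀ n, S n ⊆ S (n + 1)) ∧
      (∀ v : V, ∃ n, v ∈ S n) ∧
      (∀ n, ((Gᶜ).induce ((S n : Set V))).Connected) := by
  classical
  obtain ⟨u⟩ := hconn.nonempty
  obtain ⟨v, huv⟩ := hconn.preconnected.exists_adj_of_nontrivial u
  have hpair : ((Gᶜ).induce (({u, v} : Finset V) : Set V)).Connected := by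
    rw [Finset.coe_pair]
    exact SimpleGraph.induce_pair_connected_of_adj huv
  obtain ⟨S, hcard, hmono, hcover, hS⟩ := hconn.exists_exhaustion hpair
  refine ⟨S, fun n => ?_, fun n => hmono n.le_succ, hcover, hS⟩
  rw [hcard, Finset.card_pair huv.ne, add_comm]
end

section
/- Let x be a nonzero integer. Let F = ⊕_{i∈ℤ} ℤ be the group of finitely supported functions ℤ → ℤ with standard basis (e_i), let H ≤ F be the subgroup generated by the elements x·(e_i − e_{i+1}) for all i ∈ ℤ, let G = F/H, and let φ : G → G be the automorphism induced by the shift e_i ↦ e_{i+1}. Then the kernel of id − φ : G → G is the subgroup generated by the class of x·e_0, which is infinite cyclic (so ker(id − φ) ≅ ℤ), and the cokernel of id − φ is infinite cyclic, generated by the class of e_0 (so coker(id − φ) ≅ ℤ). -/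
/-!
Think of `ℤ →₀ ℤ` as the Laurent polynomials `ℤ[t, t⁻¹]`, the shift being multiplication by `t`.
Then `H = x (1 - t) F` and `id - φ` is induced by the backward difference `T = 1 - t`, which is
injective on `F`. So `[f]` lies in the kernel iff `T f ∈ T (x F)` iff `f ∈ x F`, and modulo `H`
every `x f` is `ε(f) • x e₀`, where the augmentation `ε` (sum of coefficients) has kernel `T F`.
The cokernel is `F ⧸ (H + T F) = F ⧸ ker ε ≅ ℤ`.
-/

open Finsupp AddSubgroup

namespace QuotientAddGroup

section

variable {A B : Type*} [AddGroup A] [AddGroup B] {N : AddSubgroup A} [N.Normal]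
  {N' : AddSubgroup B} [N'.Normal] {T : A →+ B} {ψ : A ⧸ N →+ B ⧸ N'}

theorem ker_eq_map_comap_of_comp_mk' (hψ : ψ.comp (mk' N) = (mk' N').comp T) :
    ψ.ker = (N'.comap T).map (mk' N) := by
  rw [← map_comap_eq_self_of_surjective (mk'_surjective N) ψ.ker, AddMonoidHom.comap_ker, hψ,
    ← AddMonoidHom.comap_ker, ker_mk']

theorem range_eq_map_range_of_comp_mk' (hψ : ψ.comp (mk' N) = (mk' N').comp T) :
    ψ.range = T.range.map (mk' N') := by
  rw [AddMonoidHom.map_range, ← hψ, ← AddMonoidHom.map_range,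
    AddMonoidHom.range_eq_top.2 (mk'_surjective N), ← AddMonoidHom.range_eq_map]

end

noncomputable def quotientRangeEquivOfCompMk' {A : Type*} [AddCommGroup A] {N : AddSubgroup A}
    {T : A →+ A} {ψ : A ⧸ N →+ A ⧸ N} (hψ : ψ.comp (mk' N) = (mk' N).comp T)
    (hN : N ≤ T.range) : (A ⧸ N) ⧸ ψ.range ≃+ A ⧸ T.range :=
  (quotientAddEquivOfEq (range_eq_map_range_of_comp_mk' hψ)).trans
    (quotientQuotientEquivQuotient N T.range hN)

end QuotientAddGroup

theorem AddEquiv.closure_symm_one_eq_top {A : Type*} [AddGroup A] (e : A ≃+ ℤ) :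
    closure {e.symm 1} = ⊤ := by
  refine (eq_top_iff' _).2 fun a => mem_closure_singleton.2 ⟨e a, ?_⟩
  rw [← map_zsmul, smul_eq_mul, mul_one, e.symm_apply_apply]

namespace LaurentShift

section Shift

variable {M : Type*} [AddCommGroup M]

noncomputable def shift : (ℤ →₀ M) →+ (ℤ →₀ M) :=
  (Finsupp.domCongr (Equiv.addRight 1)).toAddMonoidHom

noncomputable def bwdDiff : (ℤ →₀ M) →+ (ℤ →₀ M) :=
  AddMonoidHom.id _ - shift

noncomputable def augmentation : (ℤ →₀ M) →+ M :=
  liftAddHom fun _ => AddMonoidHom.id M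

@[simp]
theorem shift_single (i : ℤ) (m : M) : shift (single i m) = single (i + 1) m := by
  simp [shift]

theorem bwdDiff_apply (f : ℤ →₀ M) (i : ℤ) : bwdDiff f i = f i - f (i - 1) := by
  simp [bwdDiff, shift, sub_eq_add_neg]

theorem bwdDiff_single (i : ℤ) (m : M) :
    bwdDiff (single i m) = single i m - single (i + 1) m := by
  simp [bwdDiff]

@[simp]
theorem augmentation_single (i : ℤ) (m : M) : augmentation (single i m) = m :=
  liftAddHom_apply_single _ i m

theorem augmentation_surjective : Function.Surjective (augmentation (M := M)) :=
  fun m => ⟨single 0 m, augmentation_single 0 m⟩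

theorem augmentation_bwdDiff (f : ℤ →₀ M) : augmentation (bwdDiff f) = 0 := by
  induction f using Finsupp.induction_linear with
  | zero => simp
  | add f g hf hg => simp [hf, hg]
  | single i m => simp [bwdDiff_single]

theorem injective_bwdDiff : Function.Injective (bwdDiff (M := M)) := by
  refine (injective_iff_map_eq_zero _).2 fun f hf => ?_
  by_contra hf0
  have hne : f.support.Nonempty := support_nonempty_iff.2 hf0
  set m := f.support.max' hne
  have hm : f (m + 1) = 0 :=
    notMem_support_iff.1 fun h => by linarith [f.support.le_max' _ h]
  have := DFunLike.congr_fun hf (m + 1)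
  rw [bwdDiff_apply, hm, add_sub_cancel_right, Finsupp.zero_apply, zero_sub, neg_eq_zero] at this
  exact mem_support_iff.1 (f.support.max'_mem hne) this

theorem single_sub_single_zero_mem_range_bwdDiff (i : ℤ) (m : M) :
    single i m - single 0 m ∈ (bwdDiff (M := M)).range := by
  induction i using Int.induction_on with
  | zero => simp
  | succ k ih =>
    have hk : bwdDiff (single (k : ℤ) m) ∈ (bwdDiff (M := M)).range := ⟨_, rfl⟩
    convert sub_mem ih hk using 1
    rw [bwdDiff_single]; abel
  | pred k ih =>
    have hk : bwdDiff (single (-(k : ℤ) - 1) m) ∈ (bwdDiff (M := M)).range := ⟨_, rfl⟩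
    convert add_mem ih hk using 1
    rw [bwdDiff_single, sub_add_cancel]; abel

theorem sub_single_augmentation_mem_range_bwdDiff (f : ℤ →₀ M) :
    f - single 0 (augmentation f) ∈ (bwdDiff (M := M)).range := by
  induction f using Finsupp.induction_linear with
  | zero => simp
  | add f g hf hg =>
    convert add_mem hf hg using 1
    rw [map_add, single_add]; abel
  | single i m => simpa using single_sub_single_zero_mem_range_bwdDiff i m

theorem range_bwdDiff : (bwdDiff (M := M)).range = (augmentation (M := M)).ker := by
  refine le_antisymm ?_ fun f hf => ?_
  · rintro _ ⟨f, rfl⟩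
    exact augmentation_bwdDiff f
  · simpa [AddMonoidHom.mem_ker.1 hf] using sub_single_augmentation_mem_range_bwdDiff f

end Shift

section Relations

open QuotientAddGroup

variable (x : ℤ)

noncomputable def relations : AddSubgroup (ℤ →₀ ℤ) :=
  (zsmulAddGroupHom x).range.map bwdDiff

theorem closure_zsmul_single_sub_single :
    closure {g : ℤ →₀ ℤ | ∃ i : ℤ, g = x • (single i 1 - single (i + 1) 1)} = relations x := by
  rw [relations, AddMonoidHom.map_range]
  refine le_antisymm ((closure_le _).2 ?_) ?_
  · rintro _ ⟨i, rfl⟩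
    exact ⟨single i 1, by simp [bwdDiff_single, smul_sub]⟩
  · rintro _ ⟨f, rfl⟩
    induction f using Finsupp.induction_linear with
    | zero => simp
    | add f g hf hg => simpa using add_mem hf hg
    | single i n =>
      have hi : x • (single i 1 - single (i + 1) 1) ∈ closure
          {g : ℤ →₀ ℤ | ∃ i : ℤ, g = x • (single i 1 - single (i + 1) 1)} :=
        subset_closure ⟨i, rfl⟩
      convert zsmul_mem hi n using 1
      rw [← smul_single_one, AddMonoidHom.comp_apply, zsmulAddGroupHom_apply, smul_comm,
        map_zsmul, map_zsmul, bwdDiff_single]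

theorem relations_le_range_bwdDiff : relations x ≤ (bwdDiff (M := ℤ)).range :=
  map_le_range _ _

theorem mk'_comp_zsmulAddGroupHom :
    (mk' (relations x)).comp (zsmulAddGroupHom x) =
      (zmultiplesHom _ (mk' (relations x) (x • single 0 1))).comp augmentation := by
  refine addHom_ext' fun i => AddMonoidHom.ext_int ?_
  obtain ⟨g, hg⟩ := single_sub_single_zero_mem_range_bwdDiff i (1 : ℤ)
  suffices x • single i 1 - x • single 0 1 ∈ relations x by
    simpa [eq_iff_sub_mem] using this
  exact ⟨x • g, ⟨g, rfl⟩, by rw [map_zsmul, hg, smul_sub]⟩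

theorem comap_bwdDiff_relations : (relations x).comap bwdDiff = (zsmulAddGroupHom x).range :=
  comap_map_eq_self_of_injective injective_bwdDiff _

theorem map_mk'_comap_bwdDiff_relations :
    ((relations x).comap bwdDiff).map (mk' (relations x)) =
      (zmultiplesHom _ (mk' (relations x) (x • single 0 1))).range := by
  rw [comap_bwdDiff_relations, AddMonoidHom.map_range, mk'_comp_zsmulAddGroupHom,
    AddMonoidHom.range_comp, AddMonoidHom.range_eq_top.2 augmentation_surjective,
    ← AddMonoidHom.range_eq_map]

theorem injective_zmultiplesHom_mk'_zsmul_single (hx : x ≠ 0) :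
    Function.Injective (zmultiplesHom _ (mk' (relations x) (x • single 0 1))) := by
  refine (injective_iff_map_eq_zero _).2 fun n hn => ?_
  rw [zmultiplesHom_apply, ← map_zsmul, mk'_apply, eq_zero_iff] at hn
  have := range_bwdDiff.le (relations_le_range_bwdDiff x hn)
  rw [AddMonoidHom.mem_ker, map_zsmul, map_zsmul, augmentation_single] at this
  simpa [hx] using this

end Relations

end LaurentShift

open LaurentShift QuotientAddGroup

/-- Let `x ≠ 0`, let `F = ⊕_{i ∈ ℤ} ℤ`, let `H ≤ F` be the subgroup generated
by the elements `x • (e_i - e_{i+1})` for `i ∈ ℤ`, let `G = F ⧸ H`, and let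
`φ : G →+ G` be the homomorphism induced by the shift `e_i ↦ e_{i+1}`.  Then
the kernel of `id - φ` is the subgroup generated by the class of `x • e_0` and
is infinite cyclic (isomorphic to `ℤ`), and the cokernel of `id - φ` is
infinite cyclic, generated by the class of `e_0`. -/
theorem shift_quotient_ker_coker_equal_ratio (x : ℤ) (hx : x ≠ 0)
    (H : AddSubgroup (ℤ →₀ ℤ))
    (hH : H = AddSubgroup.closure
      {g : ℤ →₀ ℤ | ∃ i : ℤ,
        g = x • (Finsupp.single i 1 - Finsupp.single (i + 1) 1)})
    (φ : ((ℤ →₀ ℤ) ⧸ H) →+ ((ℤ →₀ ℤ) ⧸ H))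
    (hφ : ∀ i : ℤ,
      φ (QuotientAddGroup.mk' H (Finsupp.single i 1))
        = QuotientAddGroup.mk' H (Finsupp.single (i + 1) 1)) :
    ((AddMonoidHom.id ((ℤ →₀ ℤ) ⧸ H) - φ).ker
        = AddSubgroup.closure
            {QuotientAddGroup.mk' H (x • Finsupp.single 0 1)}) ∧
    Nonempty ((AddMonoidHom.id ((ℤ →₀ ℤ) ⧸ H) - φ).ker ≃+ ℤ) ∧
    (AddSubgroup.closure
        {QuotientAddGroup.mk' (AddMonoidHom.id ((ℤ →₀ ℤ) ⧸ H) - φ).range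
          (QuotientAddGroup.mk' H (Finsupp.single 0 1))} = ⊤) ∧
    Nonempty
      ((((ℤ →₀ ℤ) ⧸ H) ⧸ (AddMonoidHom.id ((ℤ →₀ ℤ) ⧸ H) - φ).range)
        ≃+ ℤ) := by
  obtain rfl : H = relations x := hH.trans (closure_zsmul_single_sub_single x)
  set ψ := AddMonoidHom.id _ - φ
  have hφ' : φ.comp (mk' _) = (mk' _).comp shift :=
    addHom_ext' fun i => AddMonoidHom.ext_int (by simpa using hφ i)
  have hψ : ψ.comp (mk' _) = (mk' _).comp bwdDiff := by
    rw [AddMonoidHom.sub_comp, hφ', bwdDiff, AddMonoidHom.comp_sub]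
    rfl
  have hker : ψ.ker = (zmultiplesHom _ (mk' _ (x • single 0 1))).range := by
    rw [ker_eq_map_comap_of_comp_mk' hψ, map_mk'_comap_bwdDiff_relations]
  let e : _ ≃+ ℤ := (quotientRangeEquivOfCompMk' hψ (relations_le_range_bwdDiff x)).trans
    ((quotientAddEquivOfEq range_bwdDiff).trans
      (quotientKerEquivOfSurjective _ augmentation_surjective))
  have he : e.symm 1 = mk' _ (mk' _ (single 0 1)) :=
    e.symm_apply_eq.2 (augmentation_single 0 1).symm
  refine ⟨by rw [hker, AddSubgroup.range_zmultiplesHom, zmultiples_eq_closure], ?_,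
    he ▸ e.closure_symm_one_eq_top, ⟨e⟩⟩
  exact ⟨(AddEquiv.addSubgroupCongr hker).trans
    (AddMonoidHom.ofInjective (injective_zmultiplesHom_mk'_zsmul_single x hx)).symm⟩
end

section
/- Let x and y be nonzero integers with x ≠ y. Let F = ⊕_{i∈ℤ} ℤ be the group of finitely supported functions ℤ → ℤ with standard basis (e_i), let H ≤ F be the subgroup generated by the elements x·e_i − y·e_{i+1} for all i ∈ ℤ, let G = F/H, and let φ : G → G be the automorphism induced by the shift e_i ↦ e_{i+1}. Then id − φ : G → G is injective, and the cokernel of id − φ is a cyclic group of order |x − y|, generated by the class of e_0. -/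
/-!
Identify `ℤ →₀ ℤ` with the Laurent polynomial ring `ℤ[T;T⁻¹]` via `e_i ↦ Tⁱ`. Then `H` becomes
the principal ideal generated by `x - yT`, `φ` becomes multiplication by `T`, and `id - φ`
multiplication by `1 - T`.

Injectivity: if `(1 - T) f = (x - yT) g`, evaluating at `T = 1` gives `(x - y) g(1) = 0`, so
`g = (1 - T) h`, and cancelling `1 - T` in the domain `ℤ[T;T⁻¹]` gives `f = (x - yT) h`.

Cokernel: modulo the range of `id - φ` every `e_i` is congruent to `e_0`, so the cokernel is
cyclic on the class of `e_0`. That class is killed by `x - y`, since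
`(x - y) e_0 = (x e_0 - y e_1) + y (e_1 - e_0)`, and the sum of coefficients modulo `x - y`
descends to a map onto `ZMod |x - y|` sending it to `1`.
-/

open LaurentPolynomial

namespace LaurentPolynomial

open Polynomial

variable {R : Type*} [CommRing R]

theorem _root_.Polynomial.toLaurent_X_sub_one : toLaurent (X - 1 : R[X]) = T 1 - 1 := by
  simp

theorem one_sub_T_dvd_of_eval₂_one_eq_zero {f : R[T;T⁻¹]}
    (hf : eval₂ (RingHom.id R) 1 f = 0) : 1 - T 1 ∣ f := by
  obtain ⟨n, q, hq⟩ := f.exists_T_pow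
  have hq1 : q.IsRoot 1 := by simpa [hf] using congrArg (eval₂ (RingHom.id R) 1) hq
  obtain ⟨r, hr⟩ := Polynomial.dvd_iff_isRoot.mpr hq1
  have hf' : f = toLaurent q * T (-n) := by
    rw [hq, mul_T_assoc, add_neg_cancel, T_zero, mul_one]
  refine ⟨-(toLaurent r * T (-n)), ?_⟩
  rw [hf', hr, map_mul, C_1, toLaurent_X_sub_one]
  ring

theorem one_sub_T_ne_zero [Nontrivial R] : (1 - T 1 : R[T;T⁻¹]) ≠ 0 := by
  rw [← neg_ne_zero, neg_sub, ← toLaurent_X_sub_one, toLaurent_ne_zero]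
  exact X_sub_C_ne_zero 1

theorem dvd_of_dvd_one_sub_T_mul [IsDomain R] {p f : R[T;T⁻¹]}
    (hp : eval₂ (RingHom.id R) 1 p ≠ 0) (h : p ∣ (1 - T 1) * f) : p ∣ f := by
  obtain ⟨g, hg⟩ := h
  have hg1 : eval₂ (RingHom.id R) 1 g = 0 := by
    simpa [hp] using (congrArg (eval₂ (RingHom.id R) 1) hg).symm
  obtain ⟨k, rfl⟩ := one_sub_T_dvd_of_eval₂_one_eq_zero hg1
  exact ⟨k, mul_left_cancel₀ one_sub_T_ne_zero (by rw [hg]; ring)⟩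

end LaurentPolynomial

theorem AddSubgroup.closure_image_eq_top {G H : Type*} [AddGroup G] [AddGroup H] {s : Set G}
    (hs : AddSubgroup.closure s = ⊤) {f : G →+ H} (hf : Function.Surjective f) :
    AddSubgroup.closure (f '' s) = ⊤ := by
  rw [← AddMonoidHom.map_closure, hs, AddSubgroup.map_top_of_surjective f hf]

section Cokernel

variable {G : Type*} [AddCommGroup G] (φ : G →+ G)

theorem QuotientAddGroup.mk'_range_id_sub_map (a : G) :
    QuotientAddGroup.mk' (AddMonoidHom.id G - φ).range (φ a) =
      QuotientAddGroup.mk' (AddMonoidHom.id G - φ).range a :=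
  QuotientAddGroup.eq_iff_sub_mem.2 ⟨-a, by simp [neg_add_eq_sub]⟩

theorem closure_mk'_range_id_sub_eq_top {g : ℤ → G}
    (hg : AddSubgroup.closure (Set.range g) = ⊤) (hφ : ∀ i, φ (g i) = g (i + 1)) :
    AddSubgroup.closure {QuotientAddGroup.mk' (AddMonoidHom.id G - φ).range (g 0)} = ⊤ := by
  have hconst : ∀ i, QuotientAddGroup.mk' (AddMonoidHom.id G - φ).range (g i) =
      QuotientAddGroup.mk' (AddMonoidHom.id G - φ).range (g 0) := by
    intro i
    induction i using Int.induction_on with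
    | zero => rfl
    | succ k ih => rw [← hφ, QuotientAddGroup.mk'_range_id_sub_map, ih]
    | pred k ih =>
      have hstep := hφ (-k - 1)
      rw [sub_add_cancel] at hstep
      rw [← ih, ← hstep, QuotientAddGroup.mk'_range_id_sub_map]
  have himage : QuotientAddGroup.mk' _ '' Set.range g =
      {QuotientAddGroup.mk' (AddMonoidHom.id G - φ).range (g 0)} := by
    simp only [← Set.range_comp, Function.comp_def, hconst, Set.range_const]
  rw [← himage]
  exact AddSubgroup.closure_image_eq_top hg (QuotientAddGroup.mk'_surjective _)

theorem range_id_sub_le_ker {Z : Type*} [AddCommGroup Z] {ρ : G →+ Z} (hρ : ρ.comp φ = ρ) :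
    (AddMonoidHom.id G - φ).range ≤ ρ.ker := by
  rintro _ ⟨a, rfl⟩
  simp [← DFunLike.congr_fun hρ a]

end Cokernel

theorem AddMonoidHom.bijective_of_closure_singleton_eq_top {Q : Type*} [AddCommGroup Q] {m : ℤ}
    {c : Q} (hc : AddSubgroup.closure {c} = ⊤) (hmc : m • c = 0) (ρ : Q →+ ZMod m.natAbs)
    (hρ : ρ c = 1) : Function.Bijective ρ := by
  have hρk : ∀ k : ℤ, ρ (k • c) = k := by simp [hρ]
  have hmul : ∀ q, ∃ k : ℤ, k • c = q := fun q =>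
    AddSubgroup.mem_closure_singleton.1 (hc ▸ AddSubgroup.mem_top q)
  refine ⟨(injective_iff_map_eq_zero ρ).2 fun q hq => ?_, fun z => ?_⟩
  · obtain ⟨k, rfl⟩ := hmul q
    rw [hρk, ZMod.intCast_zmod_eq_zero_iff_dvd, Int.natCast_natAbs, abs_dvd] at hq
    obtain ⟨j, rfl⟩ := hq
    rw [mul_comm, mul_zsmul, hmc, zsmul_zero]
  · obtain ⟨k, rfl⟩ := ZMod.intCast_surjective z
    exact ⟨k • c, hρk k⟩

theorem Finsupp.closure_range_single_one (α : Type*) :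
    AddSubgroup.closure (Set.range fun a : α => Finsupp.single a (1 : ℤ)) = ⊤ := by
  rw [← Submodule.span_int_eq_addSubgroupClosure, ← Finsupp.coe_basisSingleOne,
    Module.Basis.span_eq, Submodule.top_toAddSubgroup]

theorem closure_range_mk'_single_eq_top (H : AddSubgroup (ℤ →₀ ℤ)) :
    AddSubgroup.closure (Set.range fun i => QuotientAddGroup.mk' H (Finsupp.single i 1)) = ⊤ := by
  rw [← Function.comp_def (QuotientAddGroup.mk' H), Set.range_comp]
  exact AddSubgroup.closure_image_eq_top (Finsupp.closure_range_single_one ℤ)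
    (QuotientAddGroup.mk'_surjective H)

open AddMonoidAlgebra in
theorem map_mk'_eq_mk'_coeff_T_mul {H : AddSubgroup (ℤ →₀ ℤ)}
    {φ : (ℤ →₀ ℤ) ⧸ H →+ (ℤ →₀ ℤ) ⧸ H}
    (hφ : ∀ i : ℤ, φ (QuotientAddGroup.mk' H (Finsupp.single i 1)) =
      QuotientAddGroup.mk' H (Finsupp.single (i + 1) 1)) (f : ℤ →₀ ℤ) :
    φ (QuotientAddGroup.mk' H f) = QuotientAddGroup.mk' H (coeff (T 1 * ofCoeff f)) := by
  let S : (ℤ →₀ ℤ) →+ (ℤ →₀ ℤ) := (coeffAddEquiv (R := ℤ) (M := ℤ)).toAddMonoidHom.comp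
    ((AddMonoidHom.mulLeft (T 1)).comp (coeffAddEquiv (R := ℤ) (M := ℤ)).symm.toAddMonoidHom)
  have hS : φ.comp (QuotientAddGroup.mk' H) = (QuotientAddGroup.mk' H).comp S := by
    refine AddMonoidHom.eq_of_eqOn_dense (Finsupp.closure_range_single_one ℤ) ?_
    rintro _ ⟨i, rfl⟩
    change φ (QuotientAddGroup.mk' H _) = QuotientAddGroup.mk' H (coeff (T 1 * T i))
    rw [hφ, ← T_add, add_comm]
    rfl
  exact DFunLike.congr_fun hS f

noncomputable def shiftRelator (x y : ℤ) : ℤ[T;T⁻¹] := (x : ℤ[T;T⁻¹]) - (y : ℤ[T;T⁻¹]) * T 1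

theorem eval₂_one_shiftRelator (x y : ℤ) :
    eval₂ (RingHom.id ℤ) 1 (shiftRelator x y) = x - y := by
  simp [shiftRelator]

open AddMonoidAlgebra in
theorem ofCoeff_shiftRelation (x y i : ℤ) :
    ofCoeff (x • Finsupp.single i (1 : ℤ) - y • Finsupp.single (i + 1) 1) =
      T i * shiftRelator x y := by
  rw [← coeffAddEquiv_symm_apply, map_sub, map_zsmul, map_zsmul, coeffAddEquiv_symm_apply,
    coeffAddEquiv_symm_apply, ofCoeff_single, ofCoeff_single]
  change x • T i - y • T (i + 1) = _
  rw [zsmul_eq_mul, zsmul_eq_mul, T_add, shiftRelator]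
  ring

noncomputable def shiftRelations (x y : ℤ) : AddSubgroup (ℤ →₀ ℤ) :=
  AddSubgroup.closure {g | ∃ i : ℤ, g = x • Finsupp.single i 1 - y • Finsupp.single (i + 1) 1}

open AddMonoidAlgebra in
theorem mem_shiftRelations_iff {x y : ℤ} {f : ℤ →₀ ℤ} :
    f ∈ shiftRelations x y ↔ shiftRelator x y ∣ ofCoeff f := by
  constructor
  · intro hf
    induction hf using AddSubgroup.closure_induction with
    | mem _ hg =>
      obtain ⟨i, rfl⟩ := hg
      exact ⟨T i, by rw [ofCoeff_shiftRelation, mul_comm]⟩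
    | zero => simp
    | add _ _ _ _ ha hb => simpa using dvd_add ha hb
    | neg _ _ ha => simpa using ha.neg_right
  · rintro ⟨q, hq⟩
    rw [← coeff_ofCoeff f, hq]
    clear hq
    induction q using LaurentPolynomial.induction_on' with
    | add q r hq hr => rw [mul_add, coeff_add]; exact add_mem hq hr
    | C_mul_T n a =>
      have hmul : shiftRelator x y * (C a * T n) =
          ofCoeff (a • (x • Finsupp.single n 1 - y • Finsupp.single (n + 1) 1)) := by
        rw [← coeffAddEquiv_symm_apply, map_zsmul, coeffAddEquiv_symm_apply,
          ofCoeff_shiftRelation, smul_eq_C_mul]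
        ring
      rw [hmul, coeff_ofCoeff]
      refine zsmul_mem (AddSubgroup.subset_closure ?_) a
      exact ⟨n, rfl⟩

abbrev ShiftQuotient (x y : ℤ) : Type := (ℤ →₀ ℤ) ⧸ shiftRelations x y

namespace ShiftQuotient

variable {x y : ℤ} {φ : ShiftQuotient x y →+ ShiftQuotient x y}

open AddMonoidAlgebra in
theorem injective_id_sub (hxy : x ≠ y)
    (hφ : ∀ i : ℤ, φ (QuotientAddGroup.mk' _ (Finsupp.single i 1)) =
      QuotientAddGroup.mk' _ (Finsupp.single (i + 1) 1)) :
    Function.Injective (AddMonoidHom.id (ShiftQuotient x y) - φ) := by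
  refine (injective_iff_map_eq_zero _).2 fun a ha => ?_
  obtain ⟨f, rfl⟩ := QuotientAddGroup.mk'_surjective _ a
  have hψ : (AddMonoidHom.id (ShiftQuotient x y) - φ) (QuotientAddGroup.mk' _ f) =
      QuotientAddGroup.mk' (shiftRelations x y) (coeff ((1 - T 1) * ofCoeff f)) := by
    rw [AddMonoidHom.sub_apply, AddMonoidHom.id_apply, map_mk'_eq_mk'_coeff_T_mul hφ, ← map_sub,
      sub_mul, one_mul, coeff_sub, coeff_ofCoeff]
  rw [hψ, QuotientAddGroup.mk'_apply, QuotientAddGroup.eq_zero_iff, mem_shiftRelations_iff,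
    ofCoeff_coeff] at ha
  rw [QuotientAddGroup.mk'_apply, QuotientAddGroup.eq_zero_iff, mem_shiftRelations_iff]
  refine dvd_of_dvd_one_sub_T_mul ?_ ha
  rw [eval₂_one_shiftRelator]
  exact sub_ne_zero.2 hxy

theorem exists_cokernel_hom_zmod
    (hφ : ∀ i : ℤ, φ (QuotientAddGroup.mk' _ (Finsupp.single i 1)) =
      QuotientAddGroup.mk' _ (Finsupp.single (i + 1) 1)) :
    ∃ ρ : ShiftQuotient x y ⧸ (AddMonoidHom.id (ShiftQuotient x y) - φ).range →+
        ZMod (x - y).natAbs,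
      ρ (QuotientAddGroup.mk' _ (QuotientAddGroup.mk' _ (Finsupp.single 0 1))) = 1 := by
  let ε : (ℤ →₀ ℤ) →+ ZMod (x - y).natAbs := Finsupp.liftAddHom fun _ => Int.castAddHom _
  have hε : ∀ i b, ε (Finsupp.single i b) = b := fun i b => Finsupp.liftAddHom_apply_single _ i b
  have hεH : shiftRelations x y ≤ ε.ker := by
    rw [shiftRelations, AddSubgroup.closure_le]
    rintro _ ⟨i, rfl⟩
    rw [SetLike.mem_coe, AddMonoidHom.mem_ker, map_sub, map_zsmul, map_zsmul, hε, hε,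
      zsmul_eq_mul, zsmul_eq_mul, Int.cast_one, mul_one, mul_one, ← Int.cast_sub,
      ZMod.intCast_zmod_eq_zero_iff_dvd, Int.natCast_natAbs, abs_dvd]
  let ρ₁ := QuotientAddGroup.lift _ ε hεH
  have hρ₁ : ρ₁.comp φ = ρ₁ := by
    refine AddMonoidHom.eq_of_eqOn_dense (closure_range_mk'_single_eq_top _) ?_
    rintro _ ⟨i, rfl⟩
    change ρ₁ (φ _) = ρ₁ _
    rw [hφ]
    simp only [ρ₁, QuotientAddGroup.mk'_apply, QuotientAddGroup.lift_mk, hε]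
  refine ⟨QuotientAddGroup.lift _ ρ₁ (range_id_sub_le_ker φ hρ₁), ?_⟩
  simp only [ρ₁, QuotientAddGroup.mk'_apply, QuotientAddGroup.lift_mk, hε, Int.cast_one]

theorem sub_zsmul_mk'_single_zero_eq_zero
    (hφ : ∀ i : ℤ, φ (QuotientAddGroup.mk' _ (Finsupp.single i 1)) =
      QuotientAddGroup.mk' _ (Finsupp.single (i + 1) 1)) :
    (x - y) • QuotientAddGroup.mk' (AddMonoidHom.id (ShiftQuotient x y) - φ).range
      (QuotientAddGroup.mk' _ (Finsupp.single 0 1)) = 0 := by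
  have hrel : x • QuotientAddGroup.mk' (shiftRelations x y) (Finsupp.single 0 1) =
      y • QuotientAddGroup.mk' _ (Finsupp.single 1 1) := by
    rw [← map_zsmul, ← map_zsmul, QuotientAddGroup.mk'_apply, QuotientAddGroup.mk'_apply,
      QuotientAddGroup.eq_iff_sub_mem]
    exact AddSubgroup.subset_closure ⟨0, rfl⟩
  have hψ : (AddMonoidHom.id (ShiftQuotient x y) - φ)
      (-y • QuotientAddGroup.mk' _ (Finsupp.single 0 1)) =
      (x - y) • QuotientAddGroup.mk' (shiftRelations x y) (Finsupp.single 0 1) := by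
    rw [AddMonoidHom.sub_apply, AddMonoidHom.id_apply, map_zsmul, hφ, zero_add, sub_zsmul, hrel]
    module
  rw [← map_zsmul (QuotientAddGroup.mk' (AddMonoidHom.id (ShiftQuotient x y) - φ).range), ← hψ,
    QuotientAddGroup.mk'_apply, QuotientAddGroup.eq_zero_iff]
  exact ⟨_, rfl⟩

end ShiftQuotient

theorem shift_quotient_injective_coker_cyclic_general (x y : ℤ)
    (hxy : x ≠ y)
    (H : AddSubgroup (ℤ →₀ ℤ))
    (hH : H = AddSubgroup.closure
      {g : ℤ →₀ ℤ | ∃ i : ℤ,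
        g = x • Finsupp.single i 1 - y • Finsupp.single (i + 1) 1})
    (φ : ((ℤ →₀ ℤ) ⧸ H) →+ ((ℤ →₀ ℤ) ⧸ H))
    (hφ : ∀ i : ℤ,
      φ (QuotientAddGroup.mk' H (Finsupp.single i 1))
        = QuotientAddGroup.mk' H (Finsupp.single (i + 1) 1)) :
    Function.Injective (AddMonoidHom.id ((ℤ →₀ ℤ) ⧸ H) - φ) ∧
    (AddSubgroup.closure
        {QuotientAddGroup.mk' (AddMonoidHom.id ((ℤ →₀ ℤ) ⧸ H) - φ).range
          (QuotientAddGroup.mk' H (Finsupp.single 0 1))} = ⊤) ∧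
    Nonempty
      ((((ℤ →₀ ℤ) ⧸ H) ⧸ (AddMonoidHom.id ((ℤ →₀ ℤ) ⧸ H) - φ).range)
        ≃+ ZMod (x - y).natAbs) := by
  obtain rfl : H = shiftRelations x y := hH
  have hgen := closure_mk'_range_id_sub_eq_top φ (closure_range_mk'_single_eq_top _) hφ
  obtain ⟨ρ, hρ⟩ := ShiftQuotient.exists_cokernel_hom_zmod hφ
  refine ⟨ShiftQuotient.injective_id_sub hxy hφ, hgen, ⟨AddEquiv.ofBijective ρ ?_⟩⟩
  exact ρ.bijective_of_closure_singleton_eq_top hgen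
    (ShiftQuotient.sub_zsmul_mk'_single_zero_eq_zero hφ) hρ

/-- Let `x ≠ 0 ≠ y` with `x ≠ y`, let `F = ⊕_{i ∈ ℤ} ℤ`, let `H ≤ F` be the
subgroup generated by the elements `x • e_i - y • e_{i+1}` for `i ∈ ℤ`, let
`G = F ⧸ H`, and let `φ : G →+ G` be the homomorphism induced by the shift
`e_i ↦ e_{i+1}`.  Then `id - φ` is injective and its cokernel is a cyclic
group of order `|x - y|`, generated by the class of `e_0`. -/
theorem shift_quotient_injective_coker_cyclic (x y : ℤ)
    (hx : x ≠ 0) (hy : y ≠ 0) (hxy : x ≠ y)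
    (H : AddSubgroup (ℤ →₀ ℤ))
    (hH : H = AddSubgroup.closure
      {g : ℤ →₀ ℤ | ∃ i : ℤ,
        g = x • Finsupp.single i 1 - y • Finsupp.single (i + 1) 1})
    (φ : ((ℤ →₀ ℤ) ⧸ H) →+ ((ℤ →₀ ℤ) ⧸ H))
    (hφ : ∀ i : ℤ,
      φ (QuotientAddGroup.mk' H (Finsupp.single i 1))
        = QuotientAddGroup.mk' H (Finsupp.single (i + 1) 1)) :
    Function.Injective (AddMonoidHom.id ((ℤ →₀ ℤ) ⧸ H) - φ) ∧
    (AddSubgroup.closure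
        {QuotientAddGroup.mk' (AddMonoidHom.id ((ℤ →₀ ℤ) ⧸ H) - φ).range
          (QuotientAddGroup.mk' H (Finsupp.single 0 1))} = ⊤) ∧
    Nonempty
      ((((ℤ →₀ ℤ) ⧸ H) ⧸ (AddMonoidHom.id ((ℤ →₀ ℤ) ⧸ H) - φ).range)
        ≃+ ZMod (x - y).natAbs) :=
  shift_quotient_injective_coker_cyclic_general x y hxy H hH φ hφ
end
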